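/- arXiv:1302.6068 — 5 statements merged into one kernel-verified Lean document; each statement's English description precedes it below -/
import Mathlib

section
/- Let A be an n×n matrix over a commutative ring, and let x, y be column vectors of length n. Then det(A + x·yᵀ) = det(A) + yᵀ·adj(A)·x, where adj(A) is the adjugate (classical adjoint) matrix of A. -/
open Matrix Function

/-!
Row `i` of `A + x yᵀ` is `A i + x i • y`. Expanding the determinant multilinearly in the rows,
every term that takes the row `x i • y` at two or more places vanishes by alternation, so only
`det A` and the terms `x i * det (A.updateRow i y)` survive; and by Cramer's rule the latter are
the coordinates of `y ᵥ* adjugate A` weighted by `x`.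
-/

namespace AlternatingMap

variable {R M N ι : Type*} [CommSemiring R] [AddCommMonoid M] [Module R M] [AddCommMonoid N]
  [Module R N] [DecidableEq ι] (f : M [⋀^ι]→ₗ[R] N) (c : ι → R) (v : ι → M) (w : M)

theorem map_piecewise_smul_const_eq_zero {s : Finset ι} (hs : s.Nontrivial) :
    f (s.piecewise (fun i => c i • w) v) = 0 := by
  obtain ⟨i, hi, j, hj, hij⟩ := hs
  -- pull the scalars out, leaving the equal rows `w` at `i` and `j`
  have hpiece : s.piecewise (fun i => c i • w) v
      = s.piecewise (fun i => c i • s.piecewise (fun _ => w) v i) (s.piecewise (fun _ => w) v) := by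
    ext k; by_cases hk : k ∈ s <;> simp [hk]
  rw [hpiece, ← f.coe_multilinearMap, MultilinearMap.map_piecewise_smul, f.coe_multilinearMap,
    f.map_eq_zero_of_eq _ (by simp [Finset.mem_coe.1 hi, Finset.mem_coe.1 hj]) hij, smul_zero]

theorem map_add_smul_const [Fintype ι] :
    f (fun i => v i + c i • w) = f v + ∑ i, c i • f (update v i w) := by
  have hsplit : (fun i => v i + c i • w) = (fun i => c i • w) + v := by
    ext i; exact add_comm _ _
  let T : Finset (Finset ι) := insert ∅ (Finset.univ.map ⟨singleton, Finset.singleton_injective⟩)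
  have hvanish : ∀ s ∉ T, f (s.piecewise (fun i => c i • w) v) = 0 := by
    intro s hs
    rcases s.eq_empty_or_nonempty with rfl | hne
    · simp [T] at hs
    obtain ⟨i, rfl⟩ | hnt := hne.exists_eq_singleton_or_nontrivial
    · simp [T] at hs
    · exact f.map_piecewise_smul_const_eq_zero c v w hnt
  rw [hsplit, f.map_add_univ, ← Finset.sum_subset (Finset.subset_univ T) fun s _ => hvanish s,
    Finset.sum_insert (by simp), Finset.sum_map, Finset.piecewise_empty]
  simp only [Embedding.coeFn_mk, Finset.piecewise_singleton, f.map_update_smul]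

end AlternatingMap

theorem Matrix.vecMul_adjugate_apply {R n : Type*} [CommRing R] [Fintype n] [DecidableEq n]
    (A : Matrix n n R) (y : n → R) (i : n) : (y ᵥ* A.adjugate) i = (A.updateRow i y).det := by
  rw [← cramer_transpose_apply, cramer_eq_adjugate_mulVec, ← adjugate_transpose, mulVec_transpose]

theorem det_add_vecMulVec {R : Type*} [CommRing R] {n : ℕ}
    (A : Matrix (Fin n) (Fin n) R) (x y : Fin n → R) :
    (A + Matrix.vecMulVec x y).det = A.det + y ⬝ᵥ (A.adjugate).mulVec x := by
  have hrows : A + vecMulVec x y = fun i => A i + x i • y := by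
    ext i j; simp [vecMulVec_apply]
  calc (A + vecMulVec x y).det
      = detRowAlternating (fun i => A i + x i • y) := by rw [hrows]; rfl
    _ = A.det + ∑ i, x i * (A.updateRow i y).det := detRowAlternating.map_add_smul_const x A y
    _ = A.det + y ⬝ᵥ A.adjugate *ᵥ x := by
      rw [dotProduct_mulVec]
      simp only [dotProduct, vecMul_adjugate_apply, mul_comm]
end

section
/- (Jacobi identity for determinants / adjugate minors) Let A be an n×n matrix over a commutative ring with n ≥ 2, and let i ≠ j be indices. Then adj(A)ᵢᵢ·adj(A)ⱼⱼ − adj(A)ᵢⱼ·adj(A)ⱼᵢ = det(A)·det(A⟨i,j⟩), where A⟨i,j⟩ is the (n−2)×(n−2) matrix obtained from A by deleting rows i,j and columns i,j. -/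
/-!
Let `B` be the identity matrix with its columns `i` and `j` replaced by the same columns of
`adj A`. Since `A * adj A = det A • 1`, the product `A * B` is `A` with columns `i`, `j` replaced
by `det A • eᵢ`, `det A • eⱼ`. Both `B` and `A * B` are block triangular for the splitting of the
indices into `{i, j}` and the rest, so `det B` is the `2 × 2` minor of `adj A` and
`det (A * B) = det A ^ 2 * det A⟨i,j⟩`. Hence the identity holds after multiplication by `det A`;
for the generic matrix over `ℤ[Xₖₗ]` the factor `det A` is a nonzero element of a domain and can be
cancelled, and every matrix is a specialization of the generic one.
-/

open Matrix

namespace Matrix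

variable {ι R : Type*} [Fintype ι] [DecidableEq ι] [CommRing R]

theorem det_eq_of_forall_eq_or_eq {κ : Type*} [Fintype κ] [DecidableEq κ] (M : Matrix κ κ R)
    {a b : κ} (hab : a ≠ b) (hκ : ∀ c, c = a ∨ c = b) :
    M.det = M a a * M b b - M a b * M b a := by
  have hbij : Function.Bijective ![a, b] := by
    refine ⟨fun p q hpq => ?_, fun c => (hκ c).elim (fun h => ⟨0, h.symm⟩) (fun h => ⟨1, h.symm⟩)⟩
    fin_cases p <;> fin_cases q <;> simp_all [eq_comm]
  rw [← det_submatrix_equiv_self (Equiv.ofBijective _ hbij), det_fin_two]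
  rfl

theorem det_toSquareBlockProp_pair (M : Matrix ι ι R) {i j : ι} (hij : i ≠ j) :
    (M.toSquareBlockProp fun k => ¬(k ≠ i ∧ k ≠ j)).det = M i i * M j j - M i j * M j i := by
  refine det_eq_of_forall_eq_or_eq _ (a := (⟨i, by simp⟩ : {k // ¬(k ≠ i ∧ k ≠ j)}))
    (b := ⟨j, by simp⟩) (by simpa [Subtype.ext_iff] using hij) fun ⟨k, hk⟩ => ?_
  simp only [Subtype.ext_iff]
  tauto

theorem det_one_updateCol_updateCol {i j : ι} (hij : i ≠ j) (u v : ι → R) :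
    (((1 : Matrix ι ι R).updateCol i u).updateCol j v).det = u i * v j - u j * v i := by
  rw [twoBlockTriangular_det _ (fun k => k ≠ i ∧ k ≠ j), det_toSquareBlockProp_pair _ hij]
  · have : toSquareBlockProp (((1 : Matrix ι ι R).updateCol i u).updateCol j v)
        (fun k => k ≠ i ∧ k ≠ j) = 1 := by
      ext ⟨k, hk⟩ ⟨l, hl⟩
      simp [toSquareBlockProp, toBlock, updateCol_ne hl.1, updateCol_ne hl.2, one_apply]
    simp [this, hij, mul_comm]
  · intro k hk l hl
    have hkl : k ≠ l := fun h => hk (h ▸ hl)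
    simp [updateCol_ne hl.1, updateCol_ne hl.2, one_apply_ne hkl]

theorem det_updateCol_single_updateCol_single (A : Matrix ι ι R) {i j : ι} (hij : i ≠ j)
    (a b : R) :
    ((A.updateCol i (Pi.single i a)).updateCol j (Pi.single j b)).det =
      (A.submatrix (fun k : {k : ι // k ≠ i ∧ k ≠ j} => k.val)
        (fun k : {k : ι // k ≠ i ∧ k ≠ j} => k.val)).det * (a * b) := by
  rw [twoBlockTriangular_det' _ (fun k => k ≠ i ∧ k ≠ j), det_toSquareBlockProp_pair _ hij]
  · congr 1
    · congr 1
      ext ⟨k, hk⟩ ⟨l, hl⟩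
      simp [toSquareBlockProp, toBlock, updateCol_ne hl.1, updateCol_ne hl.2]
    · simp [hij, hij.symm]
  · intro k hk l hl
    obtain rfl | rfl : l = i ∨ l = j := by tauto
    · simp [updateCol_ne hij, hk.1]
    · simp [hk.2]

theorem mulVec_adjugate_column (A : Matrix ι ι R) (i : ι) :
    A *ᵥ (fun k => A.adjugate k i) = Pi.single i A.det := by
  ext k
  rw [mulVec, dotProduct, ← mul_apply, mul_adjugate]
  simp [one_apply, Pi.single_apply]

theorem det_mul_adjugate_two_minor (A : Matrix ι ι R) {i j : ι} (hij : i ≠ j) :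
    A.det * (A.adjugate i i * A.adjugate j j - A.adjugate i j * A.adjugate j i) =
      A.det * (A.det * (A.submatrix (fun k : {k : ι // k ≠ i ∧ k ≠ j} => k.val)
        (fun k : {k : ι // k ≠ i ∧ k ≠ j} => k.val)).det) :=
  calc A.det * (A.adjugate i i * A.adjugate j j - A.adjugate i j * A.adjugate j i)
      = A.det * (((1 : Matrix ι ι R).updateCol i fun k => A.adjugate k i).updateCol j
          fun k => A.adjugate k j).det := by
        rw [det_one_updateCol_updateCol hij, mul_comm (A.adjugate i j)]
    _ = ((A.updateCol i (Pi.single i A.det)).updateCol j (Pi.single j A.det)).det := by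
      rw [← det_mul, mul_updateCol, mul_updateCol, mul_one, mulVec_adjugate_column,
        mulVec_adjugate_column]
    _ = _ := by rw [det_updateCol_single_updateCol_single A hij]; ring

end Matrix

theorem jacobi_adjugate_general {R : Type*} [CommRing R] {n : ℕ}
    (A : Matrix (Fin n) (Fin n) R) (i j : Fin n) (hij : i ≠ j) :
    A.adjugate i i * A.adjugate j j - A.adjugate i j * A.adjugate j i =
      A.det * (A.submatrix (fun k : {k : Fin n // k ≠ i ∧ k ≠ j} => k.val)
        (fun k : {k : Fin n // k ≠ i ∧ k ≠ j} => k.val)).det := by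
  have generic := mul_left_cancel₀ (det_mvPolynomialX_ne_zero (Fin n) ℤ)
    (det_mul_adjugate_two_minor (mvPolynomialX (Fin n) (Fin n) ℤ) hij)
  obtain ⟨φ, rfl⟩ : ∃ φ : MvPolynomial (Fin n × Fin n) ℤ →ₐ[ℤ] R,
      φ.mapMatrix (mvPolynomialX (Fin n) (Fin n) ℤ) = A :=
    ⟨_, mvPolynomialX_mapMatrix_aeval ℤ A⟩
  rw [← AlgHom.map_adjugate, ← AlgHom.map_det]
  simp only [AlgHom.mapMatrix_apply, submatrix_map, map_apply]
  rw [← AlgHom.mapMatrix_apply, ← AlgHom.map_det, ← map_mul, ← map_mul, ← map_mul, ← map_sub,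
    generic]

theorem jacobi_adjugate {R : Type*} [CommRing R] {n : ℕ} (hn : 2 ≤ n)
    (A : Matrix (Fin n) (Fin n) R) (i j : Fin n) (hij : i ≠ j) :
    A.adjugate i i * A.adjugate j j - A.adjugate i j * A.adjugate j i =
      A.det * (A.submatrix (fun k : {k : Fin n // k ≠ i ∧ k ≠ j} => k.val)
        (fun k : {k : Fin n // k ≠ i ∧ k ≠ j} => k.val)).det :=
  jacobi_adjugate_general A i j hij
end

section
/- Let Ω be an antisymmetric n×n matrix over a field of characteristic ≠ 2 with n odd. Then for all indices i, j, the cofactor entries satisfy (adj(Ω)ᵢⱼ)² = adj(Ω)ᵢᵢ · adj(Ω)ⱼⱼ. -/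
/-!
Since `Ω` is skew of odd size, `det Ω = -det Ω`, so `det Ω = 0`; and `adj Ω` is symmetric
because `adj (-Ω) = adj Ω` in odd size. An `n × n` matrix `A` with `det A = 0` has an adjugate
of rank at most one: either all `(n-1)`-minors vanish, or `rank A ≥ n - 1` and `A * adj A = 0`
leaves room for a rank of at most one by Sylvester's inequality. The `2 × 2` minors of a matrix of
rank at most one vanish.
-/

open Matrix

namespace Matrix

variable {K R : Type*} [Field K] [CommRing R] {m n ι : Type*} [Fintype n]

theorem det_submatrix_eq_zero_of_rank_lt [Fintype ι] [DecidableEq ι] (A : Matrix m n K)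
    (r : ι → m) (c : ι → n) (h : A.rank < Fintype.card ι) : (A.submatrix r c).det = 0 := by
  by_contra hdet
  have := rank_of_det_ne_zero hdet ▸ rank_submatrix_le A r c
  omega

theorem mul_eq_mul_of_rank_le_one (B : Matrix m n K) (h : B.rank ≤ 1) (i j : m) (k l : n) :
    B i k * B j l = B i l * B j k := by
  have hminor := det_submatrix_eq_zero_of_rank_lt B ![i, j] ![k, l]
    (by rw [Fintype.card_fin]; omega)
  rw [det_fin_two] at hminor
  simpa [sub_eq_zero] using hminor

theorem rank_adjugate_le_one_of_det_eq_zero {d : ℕ} {A : Matrix (Fin (d + 1)) (Fin (d + 1)) K}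
    (hA : A.det = 0) : A.adjugate.rank ≤ 1 := by
  by_cases hadj : A.adjugate = 0
  · simp [hadj]
  obtain ⟨k, l, hkl⟩ : ∃ k l, A.adjugate k l ≠ 0 := by
    by_contra! h
    exact hadj (ext h)
  have hrank : d ≤ A.rank := by
    by_contra! hlt
    apply hkl
    rw [adjugate_fin_succ_eq_det_submatrix,
      det_submatrix_eq_zero_of_rank_lt A _ _ (by rwa [Fintype.card_fin]), mul_zero]
  have hsylvester := rank_add_rank_le_card_of_mul_eq_zero (A := A) (B := A.adjugate)
    (by rw [mul_adjugate, hA, zero_smul])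
  rw [Fintype.card_fin] at hsylvester
  omega

theorem det_eq_zero_of_transpose_eq_neg [DecidableEq n] [NoZeroDivisors R] (h2 : (2 : R) ≠ 0)
    (hn : Odd (Fintype.card n)) {A : Matrix n n R} (hA : Aᵀ = -A) : A.det = 0 := by
  have hneg : A.det = -A.det := by
    conv_lhs => rw [← det_transpose, hA, det_neg, hn.neg_one_pow, neg_one_mul]
  have htwo : (2 : R) * A.det = 0 := by linear_combination hneg
  exact (mul_eq_zero.1 htwo).resolve_left h2

theorem adjugate_transpose_eq_self_of_transpose_eq_neg [DecidableEq n] (hn : Odd (Fintype.card n))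
    {A : Matrix n n R} (hA : Aᵀ = -A) : A.adjugateᵀ = A.adjugate := by
  have heven : Even (Fintype.card n - 1) := hn.tsub_odd odd_one
  rw [adjugate_transpose, hA, ← neg_one_smul R A, adjugate_smul, heven.neg_one_pow, one_smul]

end Matrix

theorem adjugate_sq_skew_odd {K : Type*} [Field K] (hchar : (2 : K) ≠ 0) {n : ℕ}
    (hn : Odd n) (Ω : Matrix (Fin n) (Fin n) K) (hΩ : Ωᵀ = -Ω) (i j : Fin n) :
    (Ω.adjugate i j) ^ 2 = Ω.adjugate i i * Ω.adjugate j j := by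
  obtain ⟨d, rfl⟩ : ∃ d, n = d + 1 := Nat.exists_eq_add_one.2 hn.pos
  have hcard : Odd (Fintype.card (Fin (d + 1))) := by rwa [Fintype.card_fin]
  have hdet : Ω.det = 0 := det_eq_zero_of_transpose_eq_neg hchar hcard hΩ
  have hsymm : Ω.adjugate j i = Ω.adjugate i j := by
    rw [← transpose_apply Ω.adjugate, adjugate_transpose_eq_self_of_transpose_eq_neg hcard hΩ]
  rw [sq, mul_eq_mul_of_rank_le_one _ (rank_adjugate_le_one_of_det_eq_zero hdet) i j i j, hsymm]
end

section
/- Let Ω be a real antisymmetric matrix of odd order n with rank(Ω) = n − 1. Then rank(adj(Ω)) = 1, adj(Ω) is symmetric positive semidefinite, and for any X ∈ ℝⁿ one has √(Xᵀ·adj(Ω)·X) = |Xᵀβ| where β ∈ ℝⁿ satisfies adj(Ω) = β·βᵀ. -/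
/-!
The columns of `adj Ω` lie in `ker Ω = ℝ v` because `Ω adj Ω = det Ω • 1 = 0`, and `adj Ω` is
symmetric since `n - 1` is even; hence `adj Ω = d • v vᵀ`. An entry `adj Ω i i` with `v i ≠ 0` is
nonzero: `Ω` with row `i` replaced by `eᵢ` is injective, since `vᵀ Ω = 0` recovers the lost row
and `ker Ω = ℝ v` meets `{x | xᵢ = 0}` trivially. For the sign, `Ω + t • 1` has quadratic form
`t ‖x‖²` for `t > 0`, so it has positive determinant (deform it to `1`), which makes the quadratic
form of its adjugate nonnegative; letting `t → 0` gives `0 ≤ xᵀ adj Ω x`, so `d > 0` and `β = √d • v`.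
-/

open Matrix

namespace Matrix

variable {n : Type*} [Fintype n]

section TransposeEqNeg

variable {R : Type*} [CommRing R] {Ω : Matrix n n R}

theorem det_eq_zero_of_transpose_eq_neg_s12 [DecidableEq n] [IsAddTorsionFree R] (hΩ : Ωᵀ = -Ω)
    (hn : Odd (Fintype.card n)) : Ω.det = 0 := by
  refine self_eq_neg.mp ?_
  calc Ω.det = Ωᵀ.det := (det_transpose Ω).symm
    _ = -Ω.det := by rw [hΩ, det_neg, hn.neg_one_pow, neg_one_mul]

theorem isSymm_adjugate_of_transpose_eq_neg [DecidableEq n] (hΩ : Ωᵀ = -Ω)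
    (hn : Odd (Fintype.card n)) : Ω.adjugate.IsSymm := by
  rw [IsSymm, adjugate_transpose, hΩ, ← neg_one_smul R Ω, adjugate_smul,
    (Nat.Odd.sub_odd hn odd_one).neg_one_pow, one_smul]

theorem dotProduct_mulVec_self_eq_zero_of_transpose_eq_neg [IsAddTorsionFree R]
    (hΩ : Ωᵀ = -Ω) (x : n → R) : x ⬝ᵥ (Ω *ᵥ x) = 0 := by
  refine self_eq_neg.mp ?_
  calc x ⬝ᵥ (Ω *ᵥ x) = Ωᵀ *ᵥ x ⬝ᵥ x := by rw [mulVec_transpose, dotProduct_mulVec]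
    _ = -(x ⬝ᵥ (Ω *ᵥ x)) := by rw [hΩ, neg_mulVec, neg_dotProduct, dotProduct_comm]

end TransposeEqNeg

section Field

variable {K : Type*} [Field K]

theorem ker_mulVecLin_eq_span_singleton {A : Matrix n n K} (hA : A.rank + 1 = Fintype.card n)
    {v : n → K} (hAv : A *ᵥ v = 0) (hv : v ≠ 0) : LinearMap.ker A.mulVecLin = K ∙ v := by
  refine eq_span_singleton_of_mem_of_finrank_eq_one ?_ hAv hv
  have h := LinearMap.finrank_range_add_finrank_ker A.mulVecLin
  rw [Module.finrank_fintype_fun_eq_card, ← hA] at h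
  exact Nat.add_left_cancel h

theorem adjugate_apply_ne_zero [DecidableEq n] {A : Matrix n n K} {v c : n → K}
    (hker : LinearMap.ker A.mulVecLin ≤ K ∙ v) (hc : c ᵥ* A = 0) {i j : n}
    (hvi : v i ≠ 0) (hcj : c j ≠ 0) : A.adjugate i j ≠ 0 := by
  rw [adjugate_apply]
  intro hdet
  obtain ⟨x, hx0, hx⟩ := exists_mulVec_eq_zero_iff.mpr hdet
  rw [updateRow_mulVec, Function.update_eq_iff] at hx
  have hAx_single : A *ᵥ x = Pi.single j ((A *ᵥ x) j) := by
    ext k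
    by_cases hk : k = j
    · subst hk; simp
    · simpa [hk] using hx.2 k hk
  have hAx : A *ᵥ x = 0 := by
    have h := dotProduct_mulVec c A x
    rw [hc, zero_dotProduct, hAx_single, dotProduct_single, mul_eq_zero] at h
    rw [hAx_single, h.resolve_left hcj, Pi.single_zero]
  obtain ⟨s, rfl⟩ := Submodule.mem_span_singleton.mp (hker hAx)
  have hs : s * v i = 0 := by simpa [single_dotProduct] using hx.1
  exact hx0 (by rw [(mul_eq_zero.mp hs).resolve_right hvi, zero_smul])

theorem IsSymm.exists_eq_smul_vecMulVec_self [DecidableEq n] {B : Matrix n n K} (hB : B.IsSymm)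
    {v : n → K} (hv : v ≠ 0) (hrange : LinearMap.range B.mulVecLin ≤ K ∙ v) :
    ∃ d : K, B = d • vecMulVec v v := by
  have hcol : ∀ j, ∃ c : K, c • v = B.col j := fun j =>
    Submodule.mem_span_singleton.mp (hrange ⟨Pi.single j 1, mulVec_single_one B j⟩)
  choose c hc using hcol
  have hB_apply : ∀ i j, B i j = c j * v i := fun i j => (congrFun (hc j) i).symm
  obtain ⟨i₀, hi₀⟩ := Function.ne_iff.mp hv
  refine ⟨c i₀ / v i₀, ?_⟩
  ext i j
  have hsymm : B i₀ j = B j i₀ := hB.apply j i₀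
  rw [hB_apply, hB_apply] at hsymm
  rw [smul_apply, vecMulVec_apply, hB_apply, smul_eq_mul, div_mul_eq_mul_div, eq_div_iff hi₀]
  linear_combination v i * hsymm

theorem rank_vecMulVec_self [LinearOrder K] [IsStrictOrderedRing K] {β : n → K} (hβ : β ≠ 0) :
    (vecMulVec β β).rank = 1 := by
  rw [vecMulVec_eq (Fin 1), ← transpose_replicateRow, rank_transpose_mul_self,
    LinearIndependent.rank_matrix, Fintype.card_fin]
  exact linearIndependent_unique_iff.mpr hβ

end Field

section Real

variable [DecidableEq n]

theorem det_pos_of_forall_dotProduct_mulVec_pos {A : Matrix n n ℝ}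
    (hA : ∀ x ≠ 0, 0 < x ⬝ᵥ (A *ᵥ x)) : 0 < A.det := by
  set f : ℝ → ℝ := fun s => ((1 - s) • (1 : Matrix n n ℝ) + s • A).det
  have hf : Continuous f := by fun_prop
  have hne : ∀ s ∈ Set.Icc (0 : ℝ) 1, f s ≠ 0 := by
    rintro s ⟨hs₀, hs₁⟩ hfs
    obtain ⟨x, hx0, hx⟩ := exists_mulVec_eq_zero_iff.mpr hfs
    have hxx : 0 < x ⬝ᵥ x := by simpa using dotProduct_star_self_pos_iff.mpr hx0
    have hpos : 0 < (1 - s) * (x ⬝ᵥ x) + s * (x ⬝ᵥ (A *ᵥ x)) := by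
      rcases hs₀.eq_or_lt with rfl | hs
      · simpa using hxx
      · exact add_pos_of_nonneg_of_pos (mul_nonneg (by linarith) hxx.le) (mul_pos hs (hA x hx0))
    have h0 : x ⬝ᵥ (((1 - s) • (1 : Matrix n n ℝ) + s • A) *ᵥ x) = 0 := by
      rw [hx, dotProduct_zero]
    rw [add_mulVec, smul_mulVec, one_mulVec, smul_mulVec, dotProduct_add, dotProduct_smul,
      dotProduct_smul, smul_eq_mul, smul_eq_mul] at h0
    exact hpos.ne' h0
  by_contra! h
  obtain ⟨s, hs, hfs⟩ := intermediate_value_Icc' zero_le_one hf.continuousOn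
    (show (0 : ℝ) ∈ Set.Icc (f 1) (f 0) by simp [f, h])
  exact hne s hs hfs

theorem dotProduct_adjugate_mulVec_nonneg {A : Matrix n n ℝ}
    (hA : ∀ x, 0 ≤ x ⬝ᵥ (A *ᵥ x)) (x : n → ℝ) : 0 ≤ x ⬝ᵥ (A.adjugate *ᵥ x) := by
  set g : ℝ → ℝ := fun t => x ⬝ᵥ ((A + t • 1).adjugate *ᵥ x)
  have hg : Continuous g := by fun_prop
  have hpos : ∀ t ∈ Set.Ioi (0 : ℝ), 0 ≤ g t := by
    intro t (ht : 0 < t)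
    have hAt : ∀ y ≠ 0, 0 < y ⬝ᵥ ((A + t • 1) *ᵥ y) := fun y hy => by
      have hyy : 0 < y ⬝ᵥ y := by simpa using dotProduct_star_self_pos_iff.mpr hy
      rw [add_mulVec, smul_mulVec, one_mulVec, dotProduct_add, dotProduct_smul, smul_eq_mul]
      exact add_pos_of_nonneg_of_pos (hA y) (mul_pos ht hyy)
    set y := (A + t • 1).adjugate *ᵥ x
    have hy : (A + t • 1) *ᵥ y = (A + t • 1).det • x := by
      rw [mulVec_mulVec, mul_adjugate, smul_mulVec, one_mulVec]
    have key : (A + t • 1).det * g t = y ⬝ᵥ ((A + t • 1) *ᵥ y) := by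
      rw [hy, dotProduct_smul, smul_eq_mul, dotProduct_comm]
    refine nonneg_of_mul_nonneg_right ?_ (det_pos_of_forall_dotProduct_mulVec_pos hAt)
    rw [key]
    rcases eq_or_ne y 0 with hy0 | hy0
    · rw [hy0, zero_dotProduct]
    · exact (hAt y hy0).le
  have h0 : 0 ≤ g 0 := ge_of_tendsto ((hg.tendsto 0).mono_left nhdsWithin_le_nhds)
    (eventually_nhdsWithin_of_forall hpos)
  simpa [g] using h0

end Real

end Matrix

theorem adjugate_skew_odd_rank_one {n : ℕ} (hn : Odd n)
    (Ω : Matrix (Fin n) (Fin n) ℝ) (hΩ : Ωᵀ = -Ω) (hrank : Ω.rank = n - 1) :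
    (Ω.adjugate).rank = 1 ∧ (Ω.adjugate).PosSemidef ∧
      ∃ β : Fin n → ℝ, Ω.adjugate = vecMulVec β β ∧
        ∀ X : Fin n → ℝ, Real.sqrt (X ⬝ᵥ (Ω.adjugate).mulVec X) = |X ⬝ᵥ β| := by
  have hcard : Odd (Fintype.card (Fin n)) := by rwa [Fintype.card_fin]
  have hdet := det_eq_zero_of_transpose_eq_neg_s12 hΩ hcard
  obtain ⟨v, hv0, hΩv⟩ := exists_mulVec_eq_zero_iff.mpr hdet
  have hker : LinearMap.ker Ω.mulVecLin = ℝ ∙ v :=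
    ker_mulVecLin_eq_span_singleton (by rw [hrank, Fintype.card_fin]; have := hn.pos; omega)
      hΩv hv0
  have hrange : LinearMap.range Ω.adjugate.mulVecLin ≤ ℝ ∙ v := by
    rw [← hker, LinearMap.range_le_ker_iff, ← mulVecLin_mul, mul_adjugate, hdet, zero_smul,
      mulVecLin_zero]
  obtain ⟨d, hd⟩ :=
    (isSymm_adjugate_of_transpose_eq_neg hΩ hcard).exists_eq_smul_vecMulVec_self hv0 hrange
  obtain ⟨i, hi⟩ := Function.ne_iff.mp hv0
  have hvΩ : v ᵥ* Ω = 0 := by rw [← mulVec_transpose, hΩ, neg_mulVec, hΩv, neg_zero]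
  have hadj_pos : 0 < Ω.adjugate i i := by
    refine lt_of_le_of_ne ?_ (adjugate_apply_ne_zero hker.le hvΩ hi hi).symm
    simpa using dotProduct_adjugate_mulVec_nonneg
      (fun x => (dotProduct_mulVec_self_eq_zero_of_transpose_eq_neg hΩ x).ge) (Pi.single i 1)
  have hd_pos : 0 < d := by
    rw [hd, Matrix.smul_apply, vecMulVec_apply, smul_eq_mul] at hadj_pos
    exact (pos_iff_pos_of_mul_pos hadj_pos).mpr (mul_self_pos.mpr hi)
  set β := √d • v
  have hβ : Ω.adjugate = vecMulVec β β := by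
    rw [hd, smul_vecMulVec, vecMulVec_smul, smul_smul, Real.mul_self_sqrt hd_pos.le]
  have hβ0 : β ≠ 0 := smul_ne_zero (Real.sqrt_pos.mpr hd_pos).ne' hv0
  refine ⟨hβ ▸ rank_vecMulVec_self hβ0, hβ ▸ by simpa using posSemidef_vecMulVec_self_star β,
    β, hβ, fun X => ?_⟩
  rw [hβ, dotProduct_mulVec, vecMul_vecMulVec, smul_dotProduct, smul_eq_mul,
    dotProduct_comm β X, Real.sqrt_mul_self_eq_abs]
end

section
/- Let D = det(aᵢⱼ) be the determinant of an N×N matrix over a commutative ring, and for indices j, k let D[j;k] denote the (N−1)×(N−1) minor obtained by deleting row j and column k, and D[j,k;l,m] the (N−2)×(N−2) minor obtained by deleting rows j,k and columns l,m (with j<k, l<m). Then for i < j: D[i;i]·D[j;j] − D[i;j]·D[j;i] = D·D[i,j;i,j]. -/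
/-!
Let `C = adj A`. Multiplying `A` by the matrix that agrees with `C` in the columns `i, j` and
with the identity elsewhere yields a block triangular matrix, whence
`det A * det C[{i,j},{i,j}] = (det A)² * D[i,j;i,j]`. For the generic matrix over `ℤ[aₖₗ]` the
determinant is a nonzero element of a domain and may be cancelled; specialising the generic
identity gives `det C[{i,j},{i,j}] = det A * D[i,j;i,j]` over every commutative ring. The cofactor
signs of the `2 × 2` minor of `C` cancel, leaving the left-hand side of the theorem.
-/

open Matrix

section

variable {R m n : Type*} [CommRing R] [Fintype m] [DecidableEq m] [Fintype n] [DecidableEq n]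

lemma det_mul_det_toBlocks₁₁_adjugate (A : Matrix (m ⊕ n) (m ⊕ n) R) :
    A.det * A.adjugate.toBlocks₁₁.det = A.det ^ Fintype.card m * A.toBlocks₂₂.det := by
  set C := A.adjugate
  have hAC : A * C = fromBlocks (A.det • 1) 0 0 (A.det • 1) := by
    rw [mul_adjugate, ← fromBlocks_one, fromBlocks_smul, smul_zero, smul_zero]
  have hblocks : A * fromBlocks C.toBlocks₁₁ 0 C.toBlocks₂₁ 1 =
      fromBlocks (A.det • 1) A.toBlocks₁₂ 0 A.toBlocks₂₂ := by
    have h₁₁ := congrArg toBlocks₁₁ hAC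
    have h₂₁ := congrArg toBlocks₂₁ hAC
    rw [← fromBlocks_toBlocks A, ← fromBlocks_toBlocks C, fromBlocks_multiply] at h₁₁ h₂₁
    simp only [toBlocks_fromBlocks₁₁, toBlocks_fromBlocks₂₁, fromBlocks_toBlocks] at h₁₁ h₂₁
    conv_lhs => rw [← fromBlocks_toBlocks A]
    rw [fromBlocks_multiply, h₁₁, h₂₁]
    simp only [Matrix.mul_zero, Matrix.mul_one, zero_add]
  calc A.det * C.toBlocks₁₁.det = (A * fromBlocks C.toBlocks₁₁ 0 C.toBlocks₂₁ 1).det := by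
        rw [det_mul, det_fromBlocks_zero₁₂, det_one, mul_one]
    _ = A.det ^ Fintype.card m * A.toBlocks₂₂.det := by
        rw [hblocks, det_fromBlocks_zero₂₁, det_smul, det_one, mul_one]

theorem det_toBlocks₁₁_adjugate [Nonempty m] (A : Matrix (m ⊕ n) (m ⊕ n) R) :
    A.adjugate.toBlocks₁₁.det = A.det ^ (Fintype.card m - 1) * A.toBlocks₂₂.det := by
  let X := mvPolynomialX (m ⊕ n) (m ⊕ n) ℤ
  suffices X.adjugate.toBlocks₁₁.det = X.det ^ (Fintype.card m - 1) * X.toBlocks₂₂.det by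
    have := congrArg (MvPolynomial.aeval fun p : (m ⊕ n) × (m ⊕ n) => A p.1 p.2) this
    rw [← mvPolynomialX_mapMatrix_aeval ℤ A, ← AlgHom.map_adjugate]
    rwa [AlgHom.map_det, map_mul, map_pow, AlgHom.map_det, AlgHom.map_det] at this
  apply mul_left_cancel₀ (det_mvPolynomialX_ne_zero (m ⊕ n) ℤ)
  rw [det_mul_det_toBlocks₁₁_adjugate, ← mul_assoc, ← pow_succ',
    Nat.sub_add_cancel Fintype.card_pos]

end

lemma Fin.injective_sum_elim_succAbove_succAbove {n : ℕ} (j : Fin (n + 2)) (i : Fin (n + 1)) :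
    Function.Injective (Sum.elim ![j.succAbove i, j] fun k => j.succAbove (i.succAbove k)) := by
  rintro (a | a) (b | b) h
  · fin_cases a <;> fin_cases b <;> simp_all [Fin.succAbove_ne]
  · fin_cases a <;> simp_all [(Fin.succAbove_ne _ _).symm]
  · fin_cases b <;> simp_all [Fin.succAbove_ne]
  · simpa using h

noncomputable def Fin.sumSuccAboveSuccAboveEquiv {n : ℕ} (j : Fin (n + 2)) (i : Fin (n + 1)) :
    Fin 2 ⊕ Fin n ≃ Fin (n + 2) :=
  Equiv.ofBijective _ ((Fintype.bijective_iff_injective_and_card _).2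
    ⟨Fin.injective_sum_elim_succAbove_succAbove j i, by simp [add_comm]⟩)

lemma det_adjugate_submatrix_pair {R : Type*} [CommRing R] {n : ℕ}
    (A : Matrix (Fin (n + 1)) (Fin (n + 1)) R) (i j : Fin (n + 1)) :
    (A.adjugate.submatrix ![i, j] ![i, j]).det =
      (A.submatrix i.succAbove i.succAbove).det * (A.submatrix j.succAbove j.succAbove).det -
        (A.submatrix i.succAbove j.succAbove).det * (A.submatrix j.succAbove i.succAbove).det := by
  have hdiag (k : ℕ) : (-1 : R) ^ (k + k) = 1 := (Even.add_self k).neg_one_pow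
  have hoff (k l : ℕ) : (-1 : R) ^ (k + l) * (-1) ^ (l + k) = 1 := by
    rw [add_comm l, ← pow_add, hdiag]
  simp only [det_fin_two, submatrix_apply, Matrix.cons_val_zero, Matrix.cons_val_one,
    adjugate_fin_succ_eq_det_submatrix, hdiag, one_mul]
  rw [mul_mul_mul_comm, hoff, one_mul]
  ring

theorem jacobi_identity_minors {R : Type*} [CommRing R] {N : ℕ}
    (A : Matrix (Fin (N + 2)) (Fin (N + 2)) R) (i j : Fin (N + 2)) (hij : i < j) :
    (A.submatrix i.succAbove i.succAbove).det * (A.submatrix j.succAbove j.succAbove).det -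
      (A.submatrix i.succAbove j.succAbove).det * (A.submatrix j.succAbove i.succAbove).det =
    A.det *
      (A.submatrix (fun k : Fin N => j.succAbove ((Fin.castLT i (by omega)).succAbove k))
        (fun k : Fin N => j.succAbove ((Fin.castLT i (by omega)).succAbove k))).det := by
  set i' : Fin (N + 1) := Fin.castLT i (by omega)
  have hi' : j.succAbove i' = i := by
    rw [Fin.succAbove_of_castSucc_lt _ _ (by simpa [i'] using hij), Fin.castSucc_castLT]
  set e := Fin.sumSuccAboveSuccAboveEquiv j i'
  have hjacobi := det_toBlocks₁₁_adjugate (A.submatrix e e)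
  rw [adjugate_submatrix_equiv_self, det_submatrix_equiv_self, Fintype.card_fin,
    Nat.add_one_sub_one, pow_one] at hjacobi
  rw [← det_adjugate_submatrix_pair, ← hi']
  exact hjacobi
end
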